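/- arXiv:1803.03035 — 5 statements merged into one kernel-verified Lean document; each statement's English description precedes it below -/
import Mathlib

section
/- Let η : [t₀, T) → ℝ be differentiable with η(t₀) ≥ 0, and suppose η̇(t) ≥ -α(η(t)) for all t, where α : (-b,c) → ℝ is a locally Lipschitz extended class-K function and η(t) ∈ (-b,c) for all t. Then η(t) ≥ 0 for all t ∈ [t₀, T). -/
open Set

/-- Comparison lemma: if `η(t₀) ≥ 0` and `η̇(t) ≥ -α(η(t))` where `α` is a
locally Lipschitz extended class-K function on `(-b, c)` and `η(t) ∈ (-b, c)`
for all `t ∈ [t₀, T)`, then `η(t) ≥ 0` on `[t₀, T)`. -/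
theorem stmt5 (η η' α : ℝ → ℝ) (t₀ T b c : ℝ) (hb : 0 < b) (hc : 0 < c)
    (hT : t₀ < T)
    -- α is an extended class-K function on (-b, c)
    (hαcont : ContinuousOn α (Ioo (-b) c))
    (hαmono : StrictMonoOn α (Ioo (-b) c))
    (hα0 : α 0 = 0)
    -- α is locally Lipschitz on (-b, c)
    (hαlip : ∀ y ∈ Ioo (-b) c, ∃ K : NNReal, ∃ s ∈ nhdsWithin y (Ioo (-b) c),
      LipschitzOnWith K α s)
    (hder : ∀ t ∈ Ico t₀ T, HasDerivAt η (η' t) t)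
    (hmem : ∀ t ∈ Ico t₀ T, η t ∈ Ioo (-b) c)
    (hineq : ∀ t ∈ Ico t₀ T, η' t ≥ -α (η t))
    (hinit : η t₀ ≥ 0) :
    ∀ t ∈ Ico t₀ T, η t ≥ 0 := by
  intro t ht
  by_contra hneg
  push_neg at hneg
  have h0mem : (0 : ℝ) ∈ Ioo (-b) c := ⟨by linarith, hc⟩
  have hsub : Icc t₀ t ⊆ Ico t₀ T := fun s hs => ⟨hs.1, lt_of_le_of_lt hs.2 ht.2⟩
  have hcont : ContinuousOn η (Icc t₀ t) := fun s hs =>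
    ((hder s (hsub hs)).continuousAt).continuousWithinAt
  -- the set where η is nonnegative
  set S : Set ℝ := Icc t₀ t ∩ η ⁻¹' Ici 0 with hS
  have hSne : S.Nonempty := ⟨t₀, ⟨le_refl _, ht.1⟩, hinit⟩
  have hSclosed : IsClosed S := hcont.preimage_isClosed_of_isClosed isClosed_Icc isClosed_Ici
  have hScomp : IsCompact S :=
    isCompact_Icc.of_isClosed_subset hSclosed inter_subset_left
  set t₂ := sSup S with ht₂
  have ht₂S : t₂ ∈ S := hScomp.sSup_mem hSne
  have ht₂Icc : t₂ ∈ Icc t₀ t := ht₂S.1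
  have hηt₂ : 0 ≤ η t₂ := ht₂S.2
  have ht₂lt : t₂ < t := by
    rcases lt_or_eq_of_le ht₂Icc.2 with h | h
    · exact h
    · rw [h] at hηt₂; linarith
  have hbdd : BddAbove S := hScomp.bddAbove
  -- on (t₂, t], η is negative
  have hnegOn : ∀ s ∈ Ioc t₂ t, η s < 0 := by
    intro s hs
    by_contra hge
    push_neg at hge
    have : s ∈ S := ⟨⟨le_trans ht₂Icc.1 hs.1.le, hs.2⟩, hge⟩
    exact absurd (le_csSup hbdd this) (not_le.mpr hs.1)
  -- derivative is positive on the interior of [t₂, t]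
  have hderivpos : ∀ s ∈ interior (Icc t₂ t), 0 < deriv η s := by
    intro s hs
    rw [interior_Icc] at hs
    have hsIco : s ∈ Ico t₀ T := hsub ⟨le_trans ht₂Icc.1 hs.1.le, hs.2.le⟩
    have hηs : η s < 0 := hnegOn s ⟨hs.1, hs.2.le⟩
    have hαs : α (η s) < 0 := by
      have := hαmono (hmem s hsIco) h0mem hηs
      rwa [hα0] at this
    have : 0 < η' s := lt_of_lt_of_le (by linarith) (hineq s hsIco)
    rwa [(hder s hsIco).deriv]
  have hmonot : StrictMonoOn η (Icc t₂ t) := by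
    apply strictMonoOn_of_deriv_pos (convex_Icc _ _) _ hderivpos
    exact hcont.mono (Icc_subset_Icc ht₂Icc.1 le_rfl)
  have := hmonot ⟨le_refl _, ht₂lt.le⟩ ⟨ht₂lt.le, le_refl _⟩ ht₂lt
  linarith
end

section
/- Suppose h : ℝⁿ → ℝ is continuously differentiable, with sets C = {x : h(x) ≥ 0} and D = {x : h(x) > -b} for some b > 0, and there exist a locally Lipschitz extended class-K function α : (-b,c) → ℝ, a class-K function ι : [0,a) → [0,e) with e = -lim_{r→-b} α(r), and d̄ ∈ [0,a) such that β⁻¹(ι(d̄)) < b where β(r) = -α(-r). If along every solution x(t) of ẋ = f̄(x) + g(x)d(t) with ‖d‖_∞ ≤ d̄ one has d/dt h(x(t)) ≥ -α(h(x(t))) - ι(‖d‖_∞), then the set C_d = {x : h(x) + β⁻¹(ι(‖d‖_∞)) ≥ 0} is forward invariant. -/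
/-!
Along a solution, `φ(t) = h(x(t))` satisfies `φ' ≥ -α(φ) - ι(‖d‖_∞) = α(-γ) - α(φ)`, because
`β(γ) = ι`. Since `α` is increasing, `φ' ≥ 0` whenever `φ` lies below the level `-γ`, so a
fencing argument shows that `φ` can never cross below that level once it starts above it.
-/

open Set

theorem le_image_of_deriv_right_nonneg_below {f f' : ℝ → ℝ} {a b L : ℝ}
    (hf : ContinuousOn f (Icc a b)) (hf' : ∀ x ∈ Ico a b, HasDerivWithinAt f (f' x) (Ici x) x)
    (ha : L ≤ f a) (bound : ∀ x ∈ Ico a b, f x < L → 0 ≤ f' x) :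
    ∀ ⦃x⦄, x ∈ Icc a b → L ≤ f x := by
  intro x hx
  -- compare `-f` with the strictly increasing fence `t ↦ ε (t - a + 1) - L`, then let `ε → 0`
  have fenced : ∀ ε > 0, L ≤ f x + ε * (x - a + 1) := by
    intro ε hε
    have key := image_le_of_deriv_right_lt_deriv_boundary' (f := fun t => -f t)
      (f' := fun t => -f' t) (B := fun t => ε * (t - a + 1) - L) (B' := fun _ => ε) hf.neg
      (fun t ht => (hf' t ht).neg) (by linarith) (by fun_prop)
      (fun t _ => ((((hasDerivAt_id t).sub_const a).add_const 1).const_mul ε).sub_const L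
        |>.hasDerivWithinAt |>.congr_deriv (by ring))
      (fun t ht heq => by
        have below : f t < L := by nlinarith [ht.1]
        linarith [bound t ht below])
      hx
    linarith
  have hpos : 0 < x - a + 1 := by linarith [hx.1]
  refine le_of_forall_pos_le_add fun δ hδ => ?_
  have := fenced (δ / (x - a + 1)) (div_pos hδ hpos)
  rwa [div_mul_cancel₀ _ hpos.ne'] at this

theorem stmt6_general (n m : ℕ) (h : EuclideanSpace ℝ (Fin n) → ℝ) (hh : ContDiff ℝ 1 h)
    (α ι γ : ℝ → ℝ) (b c dbar : ℝ) (hc : 0 < c)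
    -- α is a locally Lipschitz extended class-K function on (-b, c)
    (hαmono : StrictMonoOn α (Ioo (-b) c))
    -- d̄ ∈ [0, a) and γ = β⁻¹ ∘ ι with β(r) = -α(-r), with β⁻¹(ι(d̄)) < b
    (hγ : ∀ s ∈ Icc (0:ℝ) dbar, γ s ∈ Ico (0:ℝ) b ∧ -α (-(γ s)) = ι s)
    -- the dynamics and the disturbance with ‖d‖_∞ ≤ Dn ≤ d̄
    (fbar : EuclideanSpace ℝ (Fin n) → EuclideanSpace ℝ (Fin n))
    (g : EuclideanSpace ℝ (Fin n) →
      (EuclideanSpace ℝ (Fin m) →ₗ[ℝ] EuclideanSpace ℝ (Fin n)))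
    (d : ℝ → EuclideanSpace ℝ (Fin m)) (Dn : ℝ)
    (hDn : Dn ∈ Icc (0:ℝ) dbar)
    (x : ℝ → EuclideanSpace ℝ (Fin n)) (t₀ T : ℝ)
    (hode : ∀ t ∈ Ico t₀ T, HasDerivAt x (fbar (x t) + g (x t) (d t)) t)
    -- the solution remains in D = {x : h(x) > -b} and h(x(t)) < c
    (hdom : ∀ t ∈ Ico t₀ T, h (x t) ∈ Ioo (-b) c)
    -- ISSf-BF inequality along the solution
    (hbar : ∀ t ∈ Ico t₀ T, deriv (fun s => h (x s)) t ≥ -α (h (x t)) - ι Dn)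
    -- initial condition in C_d
    (hinit : h (x t₀) + γ Dn ≥ 0) :
    ∀ t ∈ Ico t₀ T, h (x t) + γ Dn ≥ 0 := by
  intro t ht
  set φ : ℝ → ℝ := fun s => h (x s)
  have hφ : ∀ s ∈ Ico t₀ T, HasDerivAt φ (deriv φ s) s := fun s hs =>
    ((hh.differentiable one_ne_zero (x s)).hasFDerivAt.comp_hasDerivAt s
      (hode s hs)).differentiableAt.hasDerivAt
  have hsub : Icc t₀ t ⊆ Ico t₀ T := fun s hs => ⟨hs.1, hs.2.trans_lt ht.2⟩
  obtain ⟨⟨hγ0, hγb⟩, hβγ⟩ := hγ Dn hDn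
  have hlevel : -γ Dn ∈ Ioo (-b) c := ⟨by linarith, by linarith⟩
  suffices -γ Dn ≤ φ t by linarith
  refine le_image_of_deriv_right_nonneg_below (f' := deriv φ)
    (fun s hs => (hφ s (hsub hs)).continuousAt.continuousWithinAt)
    (fun s hs => (hφ s (hsub (Ico_subset_Icc_self hs))).hasDerivWithinAt)
    (by linarith) (fun s hs below => ?_) ⟨ht.1, le_rfl⟩
  have hs : s ∈ Ico t₀ T := hsub (Ico_subset_Icc_self hs)
  have hα_lt : α (φ s) < α (-γ Dn) := hαmono (hdom s hs) hlevel below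
  linarith [hbar s hs]

/-- Theorem 1 (ISSf-BF implies ISSf): with `β r = -α(-r)`, `γ = β⁻¹ ∘ ι`
(encoded by `β (γ s) = ι s`), if along every solution of
`ẋ = f̄(x) + g(x) d(t)` with `‖d‖_∞ ≤ d̄` one has
`d/dt h(x(t)) ≥ -α(h(x(t))) - ι(‖d‖_∞)`, then the inflated set
`C_d = {x : h(x) + γ(‖d‖_∞) ≥ 0}` is forward invariant. -/
theorem stmt6 (n m : ℕ) (h : EuclideanSpace ℝ (Fin n) → ℝ) (hh : ContDiff ℝ 1 h)
    (α ι γ : ℝ → ℝ) (a b c e dbar : ℝ) (hb : 0 < b) (hc : 0 < c) (ha : 0 < a)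
    -- α is a locally Lipschitz extended class-K function on (-b, c)
    (hαcont : ContinuousOn α (Ioo (-b) c))
    (hαmono : StrictMonoOn α (Ioo (-b) c))
    (hα0 : α 0 = 0)
    (hαlip : ∀ y ∈ Ioo (-b) c, ∃ K : NNReal, ∃ s ∈ nhdsWithin y (Ioo (-b) c),
      LipschitzOnWith K α s)
    -- e = -lim_{r → -b} α(r)
    (he : Filter.Tendsto α (nhdsWithin (-b) (Ioi (-b))) (nhds (-e)))
    -- ι is class-K on [0, a) with values in [0, e)
    (hιcont : ContinuousOn ι (Ico 0 a)) (hιmono : StrictMonoOn ι (Ico 0 a))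
    (hι0 : ι 0 = 0) (hιmaps : MapsTo ι (Ico 0 a) (Ico 0 e))
    -- d̄ ∈ [0, a) and γ = β⁻¹ ∘ ι with β(r) = -α(-r), with β⁻¹(ι(d̄)) < b
    (hdbar : dbar ∈ Ico (0:ℝ) a)
    (hγ : ∀ s ∈ Icc (0:ℝ) dbar, γ s ∈ Ico (0:ℝ) b ∧ -α (-(γ s)) = ι s)
    (hγdbar : γ dbar < b)
    (hγmono : MonotoneOn γ (Icc 0 dbar))
    -- the dynamics and the disturbance with ‖d‖_∞ ≤ Dn ≤ d̄
    (fbar : EuclideanSpace ℝ (Fin n) → EuclideanSpace ℝ (Fin n))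
    (g : EuclideanSpace ℝ (Fin n) →
      (EuclideanSpace ℝ (Fin m) →ₗ[ℝ] EuclideanSpace ℝ (Fin n)))
    (d : ℝ → EuclideanSpace ℝ (Fin m)) (Dn : ℝ)
    (hDn : Dn ∈ Icc (0:ℝ) dbar) (hdnorm : ∀ t, ‖d t‖ ≤ Dn)
    (x : ℝ → EuclideanSpace ℝ (Fin n)) (t₀ T : ℝ) (hT : t₀ < T)
    (hode : ∀ t ∈ Ico t₀ T, HasDerivAt x (fbar (x t) + g (x t) (d t)) t)
    -- the solution remains in D = {x : h(x) > -b} and h(x(t)) < c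
    (hdom : ∀ t ∈ Ico t₀ T, h (x t) ∈ Ioo (-b) c)
    -- ISSf-BF inequality along the solution
    (hbar : ∀ t ∈ Ico t₀ T, deriv (fun s => h (x s)) t ≥ -α (h (x t)) - ι Dn)
    -- initial condition in C_d
    (hinit : h (x t₀) + γ Dn ≥ 0) :
    ∀ t ∈ Ico t₀ T, h (x t) + γ Dn ≥ 0 :=
  stmt6_general n m h hh α ι γ b c dbar hc hαmono hγ fbar g d Dn hDn x t₀ T hode hdom hbar hinit
end

section
/- Let h : ℝⁿ → ℝ be continuously differentiable with Lie derivatives L_f h, L_g h along f : ℝⁿ → ℝⁿ and g : ℝⁿ → ℝⁿˣᵐ. Suppose for all x ∈ D there exists u ∈ U with L_f h(x) + L_g h(x)·u - ‖L_g h(x)ᵀ‖² ≥ -α(h(x)). Then for all x ∈ D, all μ ∈ ℝᵐ with ‖μ‖ ≤ d̄, there exists u ∈ U with L_f h(x) + L_g h(x)·(u + μ) ≥ -α(h(x)) - ‖μ‖²/4; i.e., h is an ISSf-CBF with ι(r) = r²/4. -/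
open Set RealInnerProductSpace

/-- Theorem 2: if for all `x ∈ D` there is `u ∈ U` with
`L_f h(x) + L_g h(x)·u - ‖L_g h(x)ᵀ‖² ≥ -α(h(x))`, then `h` is an ISSf-CBF
with gain `ι(r) = r²/4`: for all `x ∈ D` and `‖μ‖ ≤ d̄`, there is `u ∈ U` with
`L_f h(x) + L_g h(x)·(u + μ) ≥ -α(h(x)) - ‖μ‖²/4`. -/
theorem stmt7 (n m : ℕ) (h : EuclideanSpace ℝ (Fin n) → ℝ)
    (Lfh : EuclideanSpace ℝ (Fin n) → ℝ)
    (Lgh : EuclideanSpace ℝ (Fin n) → EuclideanSpace ℝ (Fin m))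
    (D : Set (EuclideanSpace ℝ (Fin n))) (U : Set (EuclideanSpace ℝ (Fin m)))
    (α : ℝ → ℝ) (dbar : ℝ) (hdbar : 0 ≤ dbar)
    (hcbf : ∀ x ∈ D, ∃ u ∈ U,
      Lfh x + ⟪Lgh x, u⟫ - ‖Lgh x‖ ^ 2 ≥ -α (h x)) :
    ∀ x ∈ D, ∀ μ : EuclideanSpace ℝ (Fin m), ‖μ‖ ≤ dbar →
      ∃ u ∈ U, Lfh x + ⟪Lgh x, u + μ⟫ ≥ -α (h x) - ‖μ‖ ^ 2 / 4 := by
  intro x hx μ hμ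
  obtain ⟨u, hu, hineq⟩ := hcbf x hx
  refine ⟨u, hu, ?_⟩
  have hcs : -(‖Lgh x‖ * ‖μ‖) ≤ ⟪Lgh x, μ⟫ := neg_le_of_abs_le (abs_real_inner_le_norm _ _)
  rw [inner_add_right]
  nlinarith [sq_nonneg (‖Lgh x‖ - ‖μ‖ / 2)]
end

section
/- Let h : ℝⁿ → ℝ be twice continuously differentiable with relative degree two (L_g h ≡ 0), and define η_b = (h, L_f h)ᵀ. Suppose along solutions d/dt(L_f h)(x(t)) ≥ -k_p·h(x(t)) - k_d·L_f h(x(t)) - C with k_p, k_d > 0 such that the polynomial s² + k_d s + k_p has two real roots -λ₁, -λ₂ < 0. Then h(x(t)) + C/k_p ≥ 0 for all t ≥ t₀ whenever the initial condition satisfies h(t₀) + C/k_p ≥ 0 and L_f h(t₀) + λ₁(h(t₀) + C/k_p) ≥ 0. -/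
/-!
Both `ζ = L_f h + λ₁ (h + C/k_p)` and `h + C/k_p` satisfy a linear differential inequality
`y' + c y ≥ 0`, because `λ₁ + λ₂ = k_d` and `λ₁ λ₂ = k_p` factor the second-order inequality
as `(d/dt + λ₂)(d/dt + λ₁)(h + C/k_p) ≥ 0`. For such a `y` the function `y(t) e^{ct}` is
nondecreasing, so nonnegativity at `t₀` propagates forward: first to `ζ`, then to `h + C/k_p`.
-/

open Set Real

theorem hasDerivAt_mul_exp_const_mul {y : ℝ → ℝ} {y' c t : ℝ} (hy : HasDerivAt y y' t) :
    HasDerivAt (fun s => y s * exp (c * s)) ((y' + c * y t) * exp (c * t)) t := by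
  have hexp : HasDerivAt (fun s => exp (c * s)) (exp (c * t) * c) t := by
    simpa using ((hasDerivAt_id t).const_mul c).exp
  exact (hy.mul hexp).congr_deriv (by ring)

theorem monotoneOn_mul_exp_of_hasDerivAt_add_mul_nonneg {a b c : ℝ} {y y' : ℝ → ℝ}
    (hd : ∀ t ∈ Icc a b, HasDerivAt y (y' t) t) (hineq : ∀ t ∈ Icc a b, 0 ≤ y' t + c * y t) :
    MonotoneOn (fun s => y s * exp (c * s)) (Icc a b) :=
  monotoneOn_of_hasDerivWithinAt_nonneg (convex_Icc a b)
    (fun t ht => (hasDerivAt_mul_exp_const_mul (hd t ht)).continuousAt.continuousWithinAt)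
    (fun t ht => (hasDerivAt_mul_exp_const_mul (hd t (interior_subset ht))).hasDerivWithinAt)
    (fun t ht => mul_nonneg (hineq t (interior_subset ht)) (exp_nonneg _))

theorem nonneg_of_hasDerivAt_add_mul_nonneg {a b c : ℝ} {y y' : ℝ → ℝ}
    (hd : ∀ t ∈ Ico a b, HasDerivAt y (y' t) t) (hineq : ∀ t ∈ Ico a b, 0 ≤ y' t + c * y t)
    (ha : 0 ≤ y a) : ∀ t ∈ Ico a b, 0 ≤ y t := by
  intro t ht
  have hsub : Icc a t ⊆ Ico a b := Icc_subset_Ico_right ht.2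
  have hmono := monotoneOn_mul_exp_of_hasDerivAt_add_mul_nonneg (c := c)
    (fun s hs => hd s (hsub hs)) (fun s hs => hineq s (hsub hs))
  have hle : y a * exp (c * a) ≤ y t * exp (c * t) :=
    hmono (left_mem_Icc.2 ht.1) (right_mem_Icc.2 ht.1) ht.1
  exact nonneg_of_mul_nonneg_left ((mul_nonneg ha (exp_nonneg _)).trans hle) (exp_pos _)

theorem stmt17_general (n : ℕ) (h : EuclideanSpace ℝ (Fin n) → ℝ)
    (x : ℝ → EuclideanSpace ℝ (Fin n)) (t₀ T : ℝ)
    (Lfh D2 : ℝ → ℝ)  -- values of L_f h and d/dt(L_f h) along the solution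
    (kp kd C lam₁ lam₂ : ℝ) (hkp : 0 < kp)
    (hroots : lam₁ + lam₂ = kd ∧ lam₁ * lam₂ = kp)
    (hdh : ∀ t ∈ Ico t₀ T, HasDerivAt (fun s => h (x s)) (Lfh t) t)
    (hdLfh : ∀ t ∈ Ico t₀ T, HasDerivAt Lfh (D2 t) t)
    (hineq : ∀ t ∈ Ico t₀ T, D2 t ≥ -kp * h (x t) - kd * Lfh t - C)
    (hinit₁ : h (x t₀) + C / kp ≥ 0)
    (hinit₂ : Lfh t₀ + lam₁ * (h (x t₀) + C / kp) ≥ 0) :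
    ∀ t ∈ Ico t₀ T, h (x t) + C / kp ≥ 0 := by
  obtain ⟨hsum, hprod⟩ := hroots
  have hC : kp * (C / kp) = C := mul_div_cancel₀ C hkp.ne'
  have hdu : ∀ t ∈ Ico t₀ T, HasDerivAt (fun s => h (x s) + C / kp) (Lfh t) t :=
    fun t ht => (hdh t ht).add_const _
  have hζ : ∀ t ∈ Ico t₀ T, 0 ≤ Lfh t + lam₁ * (h (x t) + C / kp) := by
    refine nonneg_of_hasDerivAt_add_mul_nonneg (c := lam₂)
      (fun t ht => (hdLfh t ht).add ((hdu t ht).const_mul lam₁)) (fun t ht => ?_) hinit₂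
    linear_combination hineq t ht - Lfh t * hsum - (h (x t) + C / kp) * hprod - hC
  exact nonneg_of_hasDerivAt_add_mul_nonneg (c := lam₁) hdu
    (fun t ht => by linarith [hζ t ht]) hinit₁

/-- Relative-degree-two exponential barrier cascade (Example 3): if along a
solution `d/dt h(x(t)) = L_f h(x(t))`,
`d/dt (L_f h)(x(t)) ≥ -k_p h(x(t)) - k_d L_f h(x(t)) - C`, where
`s² + k_d s + k_p` has real roots `-λ₁, -λ₂ < 0`, and initially
`h + C/k_p ≥ 0` and `L_f h + λ₁(h + C/k_p) ≥ 0`, then `h(x(t)) + C/k_p ≥ 0`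
for all `t ∈ [t₀, T)`. -/
theorem stmt17 (n : ℕ) (h : EuclideanSpace ℝ (Fin n) → ℝ)
    (x : ℝ → EuclideanSpace ℝ (Fin n)) (t₀ T : ℝ) (hT : t₀ < T)
    (Lfh D2 : ℝ → ℝ)  -- values of L_f h and d/dt(L_f h) along the solution
    (kp kd C lam₁ lam₂ : ℝ) (hkp : 0 < kp) (hkd : 0 < kd) (hC : 0 ≤ C)
    (hlam₁ : 0 < lam₁) (hlam₂ : 0 < lam₂)
    (hroots : lam₁ + lam₂ = kd ∧ lam₁ * lam₂ = kp)
    (hdh : ∀ t ∈ Ico t₀ T, HasDerivAt (fun s => h (x s)) (Lfh t) t)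
    (hdLfh : ∀ t ∈ Ico t₀ T, HasDerivAt Lfh (D2 t) t)
    (hineq : ∀ t ∈ Ico t₀ T, D2 t ≥ -kp * h (x t) - kd * Lfh t - C)
    (hinit₁ : h (x t₀) + C / kp ≥ 0)
    (hinit₂ : Lfh t₀ + lam₁ * (h (x t₀) + C / kp) ≥ 0) :
    ∀ t ∈ Ico t₀ T, h (x t) + C / kp ≥ 0 :=
  stmt17_general n h x t₀ T Lfh D2 kp kd C lam₁ lam₂ hkp hroots hdh hdLfh hineq hinit₁ hinit₂
end

section
/- Suppose h : ℝⁿ → ℝ is an ISSf-CBF in the sense that for each x there exists u(x) with L_f h(x) + L_g h(x)·u(x) ≥ -λh(x) + ε·‖L_g h(x)ᵀ‖² for constants λ, ε > 0. Then under disturbance d with ‖d‖_∞ ≤ D, the closed-loop derivative satisfies ḣ ≥ -λh - D²/(4ε), and hence the invariant inflated set is C_d = {x : h(x) + D²/(4ελ) ≥ 0}; in particular C_d shrinks to C as ε → ∞. -/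
open Set RealInnerProductSpace

/-- Role of the tuning parameter `ε` in the ISSf-QP: if
`L_f h(x) + ⟨L_g h(x), u(x)⟩ ≥ -λ h(x) + ε‖L_g h(x)‖²` for all `x`, then
under any disturbance `‖d‖ ≤ D` the closed-loop derivative satisfies
`L_f h(x) + ⟨L_g h(x), u(x) + d⟩ ≥ -λ h(x) - D²/(4ε)`, so the invariant
inflated set is `C_d = {x : h(x) + D²/(4ελ) ≥ 0}`; moreover `C_d` shrinks
monotonically as `ε` grows. -/
theorem stmt19 (n m : ℕ) (h Lfh : EuclideanSpace ℝ (Fin n) → ℝ)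
    (Lgh : EuclideanSpace ℝ (Fin n) → EuclideanSpace ℝ (Fin m))
    (u : EuclideanSpace ℝ (Fin n) → EuclideanSpace ℝ (Fin m))
    (lam ε D : ℝ) (hlam : 0 < lam) (hε : 0 < ε) (hD : 0 ≤ D)
    (hcbf : ∀ x, Lfh x + ⟪Lgh x, u x⟫ ≥ -lam * h x + ε * ‖Lgh x‖ ^ 2) :
    (∀ x, ∀ dvec : EuclideanSpace ℝ (Fin m), ‖dvec‖ ≤ D →
      Lfh x + ⟪Lgh x, u x + dvec⟫ ≥ -lam * h x - D ^ 2 / (4 * ε)) ∧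
    (∀ ε₁ ε₂ : ℝ, 0 < ε₁ → ε₁ ≤ ε₂ →
      {x : EuclideanSpace ℝ (Fin n) | h x + D ^ 2 / (4 * ε₂ * lam) ≥ 0} ⊆
        {x : EuclideanSpace ℝ (Fin n) | h x + D ^ 2 / (4 * ε₁ * lam) ≥ 0}) := by
  constructor
  · intro x dvec hd
    have h1 : ⟪Lgh x, u x + dvec⟫ = ⟪Lgh x, u x⟫ + ⟪Lgh x, dvec⟫ := inner_add_right _ _ _
    have h2 : ⟪Lgh x, dvec⟫ ≥ -(‖Lgh x‖ * D) := by
      have := abs_real_inner_le_norm (Lgh x) dvec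
      have h3 : ‖Lgh x‖ * ‖dvec‖ ≤ ‖Lgh x‖ * D :=
        mul_le_mul_of_nonneg_left hd (norm_nonneg _)
      nlinarith [neg_abs_le (⟪Lgh x, dvec⟫ : ℝ)]
    have h4 : ε * ‖Lgh x‖ ^ 2 - ‖Lgh x‖ * D ≥ -(D ^ 2 / (4 * ε)) := by
      rw [ge_iff_le, neg_le, le_div_iff₀ (by positivity)]
      nlinarith [sq_nonneg (2 * ε * ‖Lgh x‖ - D)]
    have := hcbf x
    rw [h1]
    nlinarith
  · intro ε₁ ε₂ hε₁ hle x hx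
    simp only [Set.mem_setOf_eq] at hx ⊢
    have : D ^ 2 / (4 * ε₂ * lam) ≤ D ^ 2 / (4 * ε₁ * lam) := by
      apply div_le_div_of_nonneg_left (by positivity) (by positivity)
      nlinarith
    linarith
end
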